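/- For every integer p ≥ 1, the Bernoulli number B_{2p} satisfies B_{2p} = (-1)^{p+1} (2p)! · D_p / (2 · (2^{2p-1} − 1)). -/

import Mathlib

/-!
Put `B(x) = x / (eˣ - 1)`. Then `2 B(x) - B(2x) = 2x / (eˣ - e⁻ˣ) = x / sinh x`, whose
coefficient of `x^(2p)` is `u_p = (2 - 2^(2p)) B_{2p} / (2p)!`; so the `u_p` are the
coefficients of the inverse of `sinh √x / √x = ∑ xⁿ / (2n+1)!`.
On the other side, expanding a Toeplitz–Hessenberg determinant along its last column gives
`∑ₖ det Tₖ xᵏ = 1 / (1 + ∑ₙ cₙ (-x)ⁿ⁺¹)`, which for `cₙ = 1 / (2n+3)!` is the inverse of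
`sin √x / √x`. Hence `D_p = (-1)^p u_p`, and the theorem is this identity solved for `B_{2p}`.
-/

def D : ℕ → ℚ
  | 0 => 1
  | k + 1 =>
    Matrix.det (fun i j : Fin (k + 1) =>
      if (i : ℕ) ≤ (j : ℕ) then 1 / ((2 * ((j : ℕ) - (i : ℕ)) + 3).factorial : ℚ)
      else if (j : ℕ) + 1 = (i : ℕ) then 1 else 0)

open PowerSeries
open scoped Nat

theorem Fin.val_succAbove_eq_ite {n : ℕ} (i : Fin (n + 1)) (j : Fin n) :
    (i.succAbove j : ℕ) = if (j : ℕ) < i then (j : ℕ) else j + 1 := by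
  unfold Fin.succAbove
  split_ifs <;> simp_all [Fin.lt_def]

section ToeplitzHessenberg

variable {R : Type*} [CommRing R] (c : ℕ → R)

def toeplitzHessenberg (k : ℕ) : Matrix (Fin k) (Fin k) R :=
  Matrix.of fun i j => if (i : ℕ) ≤ j then c (j - i) else if (j : ℕ) + 1 = i then 1 else 0

theorem det_toeplitzHessenberg_submatrix_succAbove_castSucc (k : ℕ) (i : Fin (k + 1)) :
    ((toeplitzHessenberg c (k + 1)).submatrix i.succAbove Fin.castSucc).det =
      (toeplitzHessenberg c i).det := by
  induction k with
  | zero => rw [Fin.fin_one_eq_zero i]; rfl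
  | succ k ih =>
    cases i using Fin.lastCases with
    | last =>
      congr 1
      ext a b
      simp [toeplitzHessenberg, Fin.succAbove_last]
    | cast i =>
      set N := (toeplitzHessenberg c (k + 2)).submatrix i.castSucc.succAbove Fin.castSucc
      have hrow : ∀ j, N (Fin.last k) j = if j = Fin.last k then 1 else 0 := by
        intro j
        have hi := i.isLt
        have hj := j.isLt
        simp only [N, toeplitzHessenberg, Matrix.submatrix_apply, Matrix.of_apply,
          Fin.val_succAbove_eq_ite, Fin.val_castSucc, Fin.val_last, Fin.ext_iff]
        split_ifs <;> first | rfl | omega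
      rw [Matrix.det_succ_row N (Fin.last k), Fintype.sum_eq_single (Fin.last k)
        (fun j hj => by rw [hrow, if_neg hj, mul_zero, zero_mul]), hrow, if_pos rfl,
        Fin.val_castSucc, ← ih i]
      simp only [Fin.val_last, ← two_mul, pow_mul, neg_one_sq, one_pow, one_mul, mul_one]
      congr 1
      ext a b
      simp [N, toeplitzHessenberg, Fin.succAbove_last, Fin.val_succAbove_eq_ite]

theorem det_toeplitzHessenberg_succ (k : ℕ) :
    (toeplitzHessenberg c (k + 1)).det =
      ∑ i ∈ Finset.range (k + 1),
        (toeplitzHessenberg c i).det * ((-1) ^ (k - i) * c (k - i)) := by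
  rw [Matrix.det_succ_column _ (Fin.last k), ← Fin.sum_univ_eq_sum_range]
  refine Fintype.sum_congr _ _ fun i => ?_
  have hi : (i : ℕ) ≤ k := Nat.lt_succ_iff.mp i.isLt
  rw [Fin.succAbove_last, det_toeplitzHessenberg_submatrix_succAbove_castSucc]
  have hsign : (-1 : R) ^ ((i : ℕ) + k) = (-1) ^ (k - i) := by
    rw [show (i : ℕ) + k = k - i + 2 * i by omega, pow_add, pow_mul, neg_one_sq, one_pow, mul_one]
  simp only [toeplitzHessenberg, Matrix.of_apply, Fin.val_last, if_pos hi, hsign]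
  ring

theorem mk_det_toeplitzHessenberg_mul_rescale_one_add_X_mul :
    mk (fun k => (toeplitzHessenberg c k).det) * rescale (-1) (1 + X * mk c) = 1 := by
  have hrescale : rescale (-1 : R) (1 + X * mk c) = 1 - X * mk fun m => (-1) ^ m * c m := by
    ext (_ | m)
    · simp
    · simp [coeff_succ_X_mul, coeff_rescale]
  ext (_ | k)
  · simp
  · rw [hrescale, mul_sub, mul_one, mul_left_comm, map_sub, coeff_succ_X_mul, coeff_mk, coeff_mul,
      Finset.Nat.sum_antidiagonal_eq_sum_range_succ_mk, det_toeplitzHessenberg_succ]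
    simp

end ToeplitzHessenberg

noncomputable def sinhSqrtDivSqrt : ℚ⟦X⟧ := mk fun n => 1 / (2 * n + 1)!

noncomputable def sqrtDivSinhSqrt : ℚ⟦X⟧ :=
  mk fun n => (2 - 2 ^ (2 * n)) * bernoulli (2 * n) / (2 * n)!

theorem two_mul_bernoulliPowerSeries_sub_rescale_mul_exp_sub_exp_neg :
    (2 * bernoulliPowerSeries ℚ - rescale 2 (bernoulliPowerSeries ℚ)) *
      (exp ℚ - rescale (-1) (exp ℚ)) = 2 * X := by
  have h1 := bernoulliPowerSeries_mul_exp_sub_one ℚ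
  have h2 : rescale 2 (bernoulliPowerSeries ℚ) * (exp ℚ * exp ℚ - 1) = 2 * X := by
    have := congrArg (rescale (2 : ℚ)) h1
    have hexp : rescale (2 : ℚ) (exp ℚ) = exp ℚ * exp ℚ := by
      simpa [one_add_one_eq_two] using (exp_mul_exp_eq_exp_add (1 : ℚ) 1).symm
    rwa [map_mul, map_sub, map_one, rescale_X, map_ofNat, hexp] at this
  have h3 : exp ℚ * rescale (-1) (exp ℚ) = 1 := exp_mul_exp_neg_eq_one
  -- multiply through by the unit `exp ℚ`, whose inverse is `exp (-x)`
  linear_combination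
    (2 * (exp ℚ + 1) * rescale (-1) (exp ℚ)) * h1 - rescale (-1) (exp ℚ) * h2 +
    (2 * X - (2 * bernoulliPowerSeries ℚ - rescale 2 (bernoulliPowerSeries ℚ)) * exp ℚ) * h3

theorem expand_sqrtDivSinhSqrt :
    expand 2 two_ne_zero sqrtDivSinhSqrt =
      2 * bernoulliPowerSeries ℚ - rescale 2 (bernoulliPowerSeries ℚ) := by
  ext n
  rw [map_sub, ← map_ofNat C, coeff_C_mul, coeff_rescale, bernoulliPowerSeries, coeff_mk,
    coeff_expand]
  split_ifs with hn
  · obtain ⟨m, rfl⟩ := hn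
    simp only [sqrtDivSinhSqrt, coeff_mk, Nat.mul_div_cancel_left _ two_pos,
      Algebra.algebraMap_self, RingHom.id_apply]
    ring
  · obtain rfl | hn1 := eq_or_ne n 1
    · norm_num
    · rw [bernoulli_eq_zero_of_odd (Nat.odd_iff.mpr (by omega)) (by omega)]
      simp

theorem two_mul_X_mul_expand_sinhSqrtDivSqrt :
    2 * (X * expand 2 two_ne_zero sinhSqrtDivSqrt) = exp ℚ - rescale (-1) (exp ℚ) := by
  ext n
  rw [← map_ofNat C, coeff_C_mul, map_sub, coeff_rescale, coeff_exp]
  cases n with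
  | zero => simp
  | succ n =>
    rw [coeff_succ_X_mul, coeff_expand]
    simp only [sinhSqrtDivSqrt, coeff_mk, Algebra.algebraMap_self, RingHom.id_apply]
    split_ifs with hn
    · obtain ⟨m, rfl⟩ := hn
      rw [Nat.mul_div_cancel_left _ two_pos, pow_succ, pow_mul, neg_one_sq]
      ring
    · rw [(Nat.odd_iff.mpr (by omega)).add_one.neg_one_pow]
      ring

theorem sqrtDivSinhSqrt_mul_sinhSqrtDivSqrt : sqrtDivSinhSqrt * sinhSqrtDivSqrt = 1 := by
  have hX : (2 * X : ℚ⟦X⟧) ≠ 0 := mul_ne_zero (by rw [← map_ofNat C]; simp) X_ne_zero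
  have h : expand 2 two_ne_zero (sqrtDivSinhSqrt * sinhSqrtDivSqrt) * (2 * X) = 1 * (2 * X) := by
    rw [map_mul, expand_sqrtDivSinhSqrt]
    linear_combination
      (2 * bernoulliPowerSeries ℚ - rescale 2 (bernoulliPowerSeries ℚ)) *
        two_mul_X_mul_expand_sinhSqrtDivSqrt +
      two_mul_bernoulliPowerSeries_sub_rescale_mul_exp_sub_exp_neg
  ext n
  have := congrArg (coeff (2 * n)) (mul_right_cancel₀ hX h)
  rw [coeff_expand_mul] at this
  simpa [coeff_one] using this

theorem D_eq_det_toeplitzHessenberg (k : ℕ) :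
    D k = (toeplitzHessenberg (fun n => 1 / ((2 * n + 3)! : ℚ)) k).det := by
  cases k
  · exact Matrix.det_fin_zero.symm
  · rfl

theorem one_add_X_mul_mk_eq_sinhSqrtDivSqrt :
    1 + X * mk (fun n => 1 / ((2 * n + 3)! : ℚ)) = sinhSqrtDivSqrt := by
  ext (_ | n)
  · simp [sinhSqrtDivSqrt]
  · simp [sinhSqrtDivSqrt, coeff_succ_X_mul, mul_add]

theorem D_eq_neg_one_pow_mul_bernoulli (p : ℕ) :
    D p = (-1) ^ p * ((2 - 2 ^ (2 * p)) * bernoulli (2 * p) / (2 * p)!) := by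
  have hD : mk D * rescale (-1) sinhSqrtDivSqrt = 1 := by
    rw [← one_add_X_mul_mk_eq_sinhSqrtDivSqrt, funext D_eq_det_toeplitzHessenberg]
    exact mk_det_toeplitzHessenberg_mul_rescale_one_add_X_mul _
  have hB : rescale (-1) sqrtDivSinhSqrt * rescale (-1) sinhSqrtDivSqrt = 1 := by
    rw [← map_mul, sqrtDivSinhSqrt_mul_sinhSqrtDivSqrt, map_one]
  have h : mk D = rescale (-1) sqrtDivSinhSqrt := by
    linear_combination rescale (-1) sqrtDivSinhSqrt * hD - mk D * hB
  simpa [coeff_rescale, sqrtDivSinhSqrt] using congrArg (coeff p) h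

theorem bernoulli_even_eq_det (p : ℕ) (hp : 1 ≤ p) :
    bernoulli (2 * p) =
      (-1 : ℚ) ^ (p + 1) * ((2 * p).factorial : ℚ) * D p /
        (2 * (2 ^ (2 * p - 1) - 1)) := by
  have hpow : (2 : ℚ) ^ (2 * p) = 2 * 2 ^ (2 * p - 1) := (mul_pow_sub_one (by omega) 2).symm
  have hden : (2 : ℚ) ^ (2 * p - 1) - 1 ≠ 0 :=
    sub_ne_zero.mpr (one_lt_pow₀ one_lt_two (by omega)).ne'
  have hsign : (-1 : ℚ) ^ (p + 1) * (-1) ^ p = -1 := by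
    rw [← pow_add, show p + 1 + p = 2 * p + 1 by ring, (odd_two_mul_add_one p).neg_one_pow]
  rw [D_eq_neg_one_pow_mul_bernoulli, hpow]
  field_simp
  linear_combination (-bernoulli (2 * p) * (1 - 2 ^ (2 * p - 1))) * hsign
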